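/- arXiv:1603.00403 — 7 statements merged into one kernel-verified Lean document; each statement's English description precedes it below -/
import Mathlib

section
/- For every 3-dimensional subspace U of V, the subspace T_U := ⋀²U∧V of ⋀³V, spanned by all u∧u'∧v with u,u' ∈ U and v ∈ V, has dimension 10 and is η-isotropic (η(ω,ω') = 0 for all ω,ω' ∈ T_U); hence T_U is a Lagrangian subspace of the 20-dimensional symplectic space (⋀³V, η). -/
/-!
Choose a basis `e₁, …, e₆` of `V` whose first three vectors span `U`. The exterior algebra has
the basis of monomials `e_S`, and `e_S ∧ e_T` is `±e_{S ∪ T}` or `0` according as `S` and `T`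
are disjoint or not. Hence `T_U` is spanned by the monomials `e_S` with `|S| = 3` and
`|S ∩ {1,2,3}| ≥ 2`, of which there are `3·3 + 1 = 10`; and any two such `S` meet inside the
three-element set `{1,2,3}`, so `T_U ∧ T_U = 0`.
-/

open ExteriorAlgebra Module

noncomputable section

variable {V : Type*} [AddCommGroup V] [Module ℂ V]

/-- The product of elements of the `j`-th and `k`-th exterior powers lies in the
`(j+k)`-th exterior power. -/
theorem mul_mem_exteriorPower {j k : ℕ} {x y : ExteriorAlgebra ℂ V}
    (hx : x ∈ ⋀[ℂ]^j V) (hy : y ∈ ⋀[ℂ]^k V) : x * y ∈ ⋀[ℂ]^(j + k) V := by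
  rw [exteriorPower, pow_add]
  exact Submodule.mul_mem_mul hx hy

theorem ι_mem_one (a : V) : ι ℂ a ∈ ⋀[ℂ]^1 V := by
  rw [exteriorPower, pow_one]
  exact LinearMap.mem_range_self _ a

theorem triple_mem (a b c : V) : ι ℂ a * ι ℂ b * ι ℂ c ∈ ⋀[ℂ]^3 V :=
  mul_mem_exteriorPower (mul_mem_exteriorPower (ι_mem_one a) (ι_mem_one b)) (ι_mem_one c)

/-- `T_U = ⋀²U ∧ V`: the subspace of `⋀³V` spanned by all `u ∧ u' ∧ v` with `u, u' ∈ U`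
and `v ∈ V`. -/
def TU (U : Submodule ℂ V) : Submodule ℂ (ExteriorAlgebra ℂ V) :=
  Submodule.span ℂ {x | ∃ u ∈ U, ∃ u' ∈ U, ∃ v : V, x = ι ℂ u * ι ℂ u' * ι ℂ v}

theorem TU_le (U : Submodule ℂ V) : TU U ≤ ⋀[ℂ]^3 V := by
  rw [TU, Submodule.span_le]
  rintro x ⟨u, -, u', -, v, rfl⟩
  exact triple_mem u u' v

open Finset Submodule

namespace ExteriorAlgebra

variable {R M I : Type*} [CommRing R] [AddCommGroup M] [Module R M] [LinearOrder I]
  (b : Basis I R M)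

lemma basis_singleton (i : I) : b.ExteriorAlgebra {i} = ι R (b i) := by
  rw [basis_apply_ofCard b (card_singleton i)]
  simp [ιMulti_apply, Set.powersetCard.ofFinEmbEquiv_symm_apply]

lemma basis_mul_eq_zero {s t : Finset I} (h : ¬Disjoint s t) :
    b.ExteriorAlgebra s * b.ExteriorAlgebra t = 0 :=
  basis_mul_of_not_disjoint b (Set.powersetCard.ofCard rfl) (Set.powersetCard.ofCard rfl) h

lemma exists_basis_mul_eq_units_smul {s t : Finset I} (h : Disjoint s t) :
    ∃ ε : ℤˣ, b.ExteriorAlgebra s * b.ExteriorAlgebra t = ε • b.ExteriorAlgebra (s ∪ t) := by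
  have := basis_mul_of_disjoint b (Set.powersetCard.ofCard rfl) (Set.powersetCard.ofCard rfl) h
  exact ⟨_, this.trans (congrArg _ (congrArg _ (disjUnion_eq_union s t h)))⟩

lemma span_basis_mul_span_basis (A C : Set (Finset I)) :
    span R (b.ExteriorAlgebra '' A) * span R (b.ExteriorAlgebra '' C) =
      span R (b.ExteriorAlgebra '' {u | ∃ s ∈ A, ∃ t ∈ C, Disjoint s t ∧ s ∪ t = u}) := by
  rw [span_mul_span]
  apply le_antisymm
  · rw [span_le]
    rintro _ ⟨_, ⟨s, hs, rfl⟩, _, ⟨t, ht, rfl⟩, rfl⟩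
    change b.ExteriorAlgebra s * b.ExteriorAlgebra t ∈ _
    by_cases hst : Disjoint s t
    · obtain ⟨ε, hε⟩ := exists_basis_mul_eq_units_smul b hst
      rw [hε]
      exact smul_mem _ _ (subset_span ⟨_, ⟨s, hs, t, ht, hst, rfl⟩, rfl⟩)
    · rw [basis_mul_eq_zero b hst]
      exact zero_mem _
  · rw [span_le]
    rintro _ ⟨_, ⟨s, hs, t, ht, hst, rfl⟩, rfl⟩
    obtain ⟨ε, hε⟩ := exists_basis_mul_eq_units_smul b hst
    have : b.ExteriorAlgebra (s ∪ t) = ε • (b.ExteriorAlgebra s * b.ExteriorAlgebra t) := by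
      rw [hε, smul_smul, Int.units_mul_self, one_smul]
    rw [SetLike.mem_coe, this]
    exact smul_mem _ _ (subset_span (Set.mul_mem_mul ⟨s, hs, rfl⟩ ⟨t, ht, rfl⟩))

lemma map_ι_span_basis (S : Set I) :
    (span R (b '' S)).map (ι R) = span R (b.ExteriorAlgebra '' ((fun i => {i}) '' S)) := by
  rw [map_span, Set.image_image, Set.image_image]
  simp_rw [basis_singleton]

lemma finrank_span_basis_image [Nontrivial R] (S : Finset (Finset I)) :
    finrank R (span R (b.ExteriorAlgebra '' S)) = #S := by
  rw [Set.image_eq_range]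
  exact (finrank_span_eq_card (b.ExteriorAlgebra.linearIndependent.comp _
    Subtype.val_injective)).trans (Fintype.card_coe S)

end ExteriorAlgebra

theorem Submodule.exists_basis_fin_castAdd {K V : Type*} [Field K] [AddCommGroup V] [Module K V]
    [FiniteDimensional K V] {k m : ℕ} (U : Submodule K V) (hU : finrank K U = k)
    (hV : finrank K V = k + m) :
    ∃ b : Basis (Fin (k + m)) K V, span K (Set.range (b ∘ Fin.castAdd m)) = U := by
  obtain ⟨W, hUW⟩ := U.exists_isCompl
  have hW : finrank K W = m := by
    have := finrank_add_eq_of_isCompl hUW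
    omega
  let bU := finBasisOfFinrankEq K U hU
  let b := ((bU.prod (finBasisOfFinrankEq K W hW)).map
    (U.prodEquivOfIsCompl W hUW)).reindex finSumFinEquiv
  have hb : b ∘ Fin.castAdd m = U.subtype ∘ bU := by
    ext i
    simp [b]
  refine ⟨b, ?_⟩
  rw [hb, Set.range_comp, ← map_span, bU.span_eq, map_top, range_subtype]

lemma card_eq_three_and_two_le_card_inter_iff {I : Type*} [DecidableEq I] (L u : Finset I) :
    (#u = 3 ∧ 2 ≤ #(u ∩ L)) ↔
      ∃ i ∈ L, ∃ j ∈ L, j ≠ i ∧ ∃ k, k ≠ j ∧ k ≠ i ∧ {k, j, i} = u := by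
  constructor
  · rintro ⟨h3, h2⟩
    obtain ⟨i, hi, j, hj, hij⟩ := one_lt_card.mp h2
    rw [mem_inter] at hi hj
    have hj' : j ∈ u.erase i := mem_erase.mpr ⟨Ne.symm hij, hj.1⟩
    obtain ⟨k, hk⟩ : ∃ k, (u.erase i).erase j = {k} := card_eq_one.mp (by
      rw [card_erase_of_mem hj', card_erase_of_mem hi.1, h3])
    have hk' : k ∈ (u.erase i).erase j := hk ▸ mem_singleton_self k
    have hkj : k ≠ j := ne_of_mem_erase hk'
    have hki : k ≠ i := ne_of_mem_erase (mem_of_mem_erase hk')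
    refine ⟨i, hi.2, j, hj.2, hij.symm, k, hkj, hki, eq_of_subset_of_card_le ?_ ?_⟩
    · simp [insert_subset_iff, mem_of_mem_erase (mem_of_mem_erase hk'), hj.1, hi.1]
    · rw [h3, card_eq_three.mpr ⟨k, j, i, hkj, hki, hij.symm, rfl⟩]
  · rintro ⟨i, hi, j, hj, hji, k, hkj, hki, rfl⟩
    refine ⟨card_eq_three.mpr ⟨k, j, i, hkj, hki, hji, rfl⟩, ?_⟩
    calc 2 = #{j, i} := (card_pair hji).symm
      _ ≤ _ := card_le_card (by simp [insert_subset_iff, hi, hj])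

lemma not_disjoint_of_two_le_card_inter {I : Type*} [DecidableEq I] {L s t : Finset I}
    (hL : #L ≤ 3) (hs : 2 ≤ #(s ∩ L)) (ht : 2 ≤ #(t ∩ L)) : ¬Disjoint s t := by
  obtain ⟨x, hx⟩ :=
    inter_nonempty_of_card_lt_card_add_card (inter_subset_right : s ∩ L ⊆ L)
      (inter_subset_right : t ∩ L ⊆ L) (by omega)
  simp only [mem_inter] at hx
  exact not_disjoint_iff.mpr ⟨x, hx.1.1, hx.2.1⟩

theorem TU_eq_map_ι_mul (U : Submodule ℂ V) :
    TU U = U.map (ι ℂ) * U.map (ι ℂ) * (⊤ : Submodule ℂ V).map (ι ℂ) := by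
  apply le_antisymm
  · rw [TU, span_le]
    rintro _ ⟨u, hu, u', hu', v, rfl⟩
    exact mul_mem_mul (mul_mem_mul (mem_map_of_mem hu) (mem_map_of_mem hu'))
      (mem_map_of_mem trivial)
  · conv_lhs => rw [← U.span_eq, ← span_univ, map_span, map_span, span_mul_span, span_mul_span]
    apply span_mono
    rintro _ ⟨_, ⟨_, ⟨u, hu, rfl⟩, _, ⟨u', hu', rfl⟩, rfl⟩, _, ⟨v, -, rfl⟩, rfl⟩
    exact ⟨u, hu, u', hu', v, rfl⟩

theorem TU_eq_span_basis {I : Type*} [LinearOrder I] (b : Basis I ℂ V) {L : Finset I}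
    {U : Submodule ℂ V} (hU : span ℂ (b '' L) = U) :
    TU U = span ℂ (b.ExteriorAlgebra '' {u | #u = 3 ∧ 2 ≤ #(u ∩ L)}) := by
  have htop : (⊤ : Submodule ℂ V) = span ℂ (b '' Set.univ) := by rw [Set.image_univ, b.span_eq]
  rw [TU_eq_map_ι_mul, ← hU, htop, map_ι_span_basis, map_ι_span_basis,
    span_basis_mul_span_basis, span_basis_mul_span_basis]
  congr 2
  ext u
  simp [↓existsAndEq, and_assoc, card_eq_three_and_two_le_card_inter_iff]

theorem TU_mul_TU_eq_bot {I : Type*} [LinearOrder I] (b : Basis I ℂ V) {L : Finset I}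
    (hL : #L ≤ 3) {U : Submodule ℂ V} (hU : span ℂ (b '' L) = U) : TU U * TU U = ⊥ := by
  rw [TU_eq_span_basis b hU, span_basis_mul_span_basis, ← span_empty]
  congr 1
  rw [Set.image_eq_empty, Set.eq_empty_iff_forall_notMem]
  rintro u ⟨s, ⟨-, hs⟩, t, ⟨-, ht⟩, hst, -⟩
  exact not_disjoint_of_two_le_card_inter hL hs ht hst

theorem statement1_general (V : Type*) [AddCommGroup V] [Module ℂ V] [FiniteDimensional ℂ V]
    (h6 : finrank ℂ V = 6)
    (vol : (⋀[ℂ]^6 V) →ₗ[ℂ] ℂ)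
    (U : Submodule ℂ V) (hU : finrank ℂ U = 3) :
    finrank ℂ (TU U) = 10 ∧
    ∀ x (hx : x ∈ TU U) y (hy : y ∈ TU U),
      vol ⟨x * y, mul_mem_exteriorPower (TU_le U hx) (TU_le U hy)⟩ = 0 := by
  obtain ⟨b, hb⟩ := U.exists_basis_fin_castAdd (k := 3) (m := 3) hU h6
  set L : Finset (Fin (3 + 3)) := univ.map (Fin.castAddEmb 3)
  have hL : span ℂ (b '' L) = U := by
    rw [← hb, Set.range_comp, coe_map, coe_univ, Set.image_univ, Fin.coe_castAddEmb]
  refine ⟨?_, fun x hx y hy => ?_⟩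
  · rw [TU_eq_span_basis b hL, ← coe_filter_univ, finrank_span_basis_image]
    decide
  · have hxy : x * y = 0 := by
      simpa [TU_mul_TU_eq_bot b (by decide) hL] using mul_mem_mul hx hy
    simp only [hxy]
    exact map_zero vol

/-- For every 3-dimensional subspace `U` of the 6-dimensional space `V`,
the subspace `T_U = ⋀²U ∧ V` of `⋀³V` has dimension 10 and is `η`-isotropic; hence it is a
Lagrangian subspace of the 20-dimensional symplectic space `(⋀³V, η)`. -/
theorem statement1 (V : Type*) [AddCommGroup V] [Module ℂ V] [FiniteDimensional ℂ V]
    (h6 : finrank ℂ V = 6)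
    (vol : (⋀[ℂ]^6 V) →ₗ[ℂ] ℂ) (hvol : vol ≠ 0)
    (U : Submodule ℂ V) (hU : finrank ℂ U = 3) :
    finrank ℂ (TU U) = 10 ∧
    ∀ x (hx : x ∈ TU U) y (hy : y ∈ TU U),
      vol ⟨x * y, mul_mem_exteriorPower (TU_le U hx) (TU_le U hy)⟩ = 0 :=
  statement1_general V h6 vol U hU
end
end

section
/- Let U and U' be 3-dimensional subspaces of V, and let ⋀³U' denote the line in ⋀³V spanned by u₁'∧u₂'∧u₃' for a basis u₁',u₂',u₃' of U'. Then ⋀³U' ⊆ T_U if and only if dim(U ∩ U') ≥ 2. (This is the linear-algebraic content of the description of the intersection of the embedded projective tangent space ℙ(T_U) to the Grassmannian G(3,V) with G(3,V) as the cone C_U with vertex [U] over the Segre embedding of ℙ(⋀²U)×ℙ(V/U).) -/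
open ExteriorAlgebra Module

noncomputable section

variable {V : Type*} [AddCommGroup V] [Module ℂ V]

/-- `⋀³U'`: the subspace of `⋀³V` spanned by all `a ∧ b ∧ c` with `a, b, c ∈ U'`; for a
3-dimensional `U'` this is the line spanned by `u₁' ∧ u₂' ∧ u₃'` for a basis of `U'`. -/
def cube (U' : Submodule ℂ V) : Submodule ℂ (ExteriorAlgebra ℂ V) :=
  Submodule.span ℂ {x | ∃ a ∈ U', ∃ b ∈ U', ∃ c ∈ U', x = ι ℂ a * ι ℂ b * ι ℂ c}

/-!
If `U ∩ U'` has codimension at most one in `U'`, then `U' ⊆ U + ℂw` for some `w`, and expanding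
`a ∧ b ∧ c` for `a, b, c ∈ U'` leaves only terms with two factors in `U`.

Conversely, if `dim (U ∩ U') ≤ 1`, choose `v₁ ∉ U`, `v₂ ∉ U + ℂv₁` and `v₀ ∉ ⟨v₁, v₂⟩` in `U'`,
and forms `f₁`, `f₂`, `f₀` vanishing on `U`, `U + ℂv₁`, `⟨v₁, v₂⟩` but not at `v₁`, `v₂`, `v₀`.
The 3-form `det (fⱼ (xᵢ))` kills `T_U`, since on `u ∧ u' ∧ v` the columns of `f₁` and `f₂` are
both supported on the row of `v`; but on `v₀ ∧ v₁ ∧ v₂` it equals `f₀ v₀ · f₁ v₁ · f₂ v₂ ≠ 0`.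
-/

section TripleForm

variable {R M : Type*} [CommRing R] [AddCommGroup M] [Module R M]

/-- `f₀ ∧ f₁ ∧ f₂` as a linear form on `⋀M`, zero outside degree `3`. -/
def tripleForm (f₀ f₁ f₂ : Module.Dual R M) : ExteriorAlgebra R M →ₗ[R] R :=
  liftAlternating
    (Pi.single 3 (Matrix.detRowAlternating.compLinearMap (LinearMap.pi ![f₀, f₁, f₂])))

theorem tripleForm_ι_mul_ι_mul_ι (f₀ f₁ f₂ : Module.Dual R M) (a b c : M) :
    tripleForm f₀ f₁ f₂ (ι R a * ι R b * ι R c) =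
      (Matrix.of fun i j => ![f₀, f₁, f₂] j (![a, b, c] i)).det := by
  have : ι R a * ι R b * ι R c = ιMulti R 3 ![a, b, c] := by
    simp [ιMulti_apply, mul_assoc]
  rw [tripleForm, this, liftAlternating_apply_ιMulti, Pi.single_eq_same]
  rfl

end TripleForm

section Dimension

variable {K W : Type*} [Field K] [AddCommGroup W] [Module K W] {U U' : Submodule K W}

theorem exists_mem_notMem_of_finrank_inf_lt {P : Submodule K W}
    (h : finrank K ↥(U' ⊓ P) < finrank K U') : ∃ v ∈ U', v ∉ P :=
  SetLike.not_le_iff_exists.1 fun hle => (inf_eq_left.2 hle ▸ h).false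

theorem finrank_inf_sup_span_singleton_le [FiniteDimensional K W] {v : W} (hv : v ∈ U') :
    finrank K ↥(U' ⊓ (U ⊔ K ∙ v)) ≤ finrank K ↥(U ⊓ U') + 1 := by
  rw [inf_comm, sup_comm, sup_inf_assoc_of_le _ ((Submodule.span_singleton_le_iff_mem v U').2 hv)]
  calc finrank K ↥(K ∙ v ⊔ U ⊓ U') ≤ finrank K (K ∙ v) + finrank K ↥(U ⊓ U') :=
        Submodule.finrank_add_le_finrank_add_finrank _ _
    _ ≤ finrank K ↥(U ⊓ U') + 1 := by
        have : finrank K (K ∙ v) ≤ 1 := (finrank_span_le_card {v}).trans (by simp)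
        omega

theorem exists_le_sup_span_singleton_of_finrank_le [FiniteDimensional K W]
    (h : finrank K U' ≤ finrank K ↥(U ⊓ U') + 1) : ∃ w, U' ≤ U ⊔ K ∙ w := by
  by_cases hU' : U' ≤ U
  · exact ⟨0, le_sup_of_le_left hU'⟩
  obtain ⟨w, hwU', hwU⟩ := SetLike.not_le_iff_exists.1 hU'
  have hlt : U ⊓ U' < U ⊓ U' ⊔ K ∙ w :=
    left_lt_sup.2 fun hw => hwU ((Submodule.span_singleton_le_iff_mem w _).1 hw).1
  have hle : U ⊓ U' ⊔ K ∙ w ≤ U' :=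
    sup_le inf_le_right ((Submodule.span_singleton_le_iff_mem w U').2 hwU')
  have heq : U ⊓ U' ⊔ K ∙ w = U' :=
    Submodule.eq_of_le_of_finrank_le hle
      (by have := Submodule.finrank_lt_finrank_of_lt hlt; omega)
  exact ⟨w, heq ▸ sup_le_sup_right inf_le_left _⟩

end Dimension

section TangentSpace

variable {U : Submodule ℂ V}

theorem ι_mul_ι_mul_ι_mem_TU₁₂ {u u' : V} (hu : u ∈ U) (hu' : u' ∈ U) (v : V) :
    ι ℂ u * ι ℂ u' * ι ℂ v ∈ TU U :=
  Submodule.subset_span ⟨u, hu, u', hu', v, rfl⟩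

theorem ι_mul_ι_mul_ι_mem_TU₁₃ {u u' : V} (hu : u ∈ U) (hu' : u' ∈ U) (v : V) :
    ι ℂ u * ι ℂ v * ι ℂ u' ∈ TU U := by
  rw [mul_assoc, eq_neg_of_add_eq_zero_left (ι_add_mul_swap v u'), mul_neg, ← mul_assoc]
  exact neg_mem (ι_mul_ι_mul_ι_mem_TU₁₂ hu hu' v)

theorem ι_mul_ι_mul_ι_mem_TU₂₃ {u u' : V} (hu : u ∈ U) (hu' : u' ∈ U) (v : V) :
    ι ℂ v * ι ℂ u * ι ℂ u' ∈ TU U := by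
  rw [eq_neg_of_add_eq_zero_left (ι_add_mul_swap v u), neg_mul]
  exact neg_mem (ι_mul_ι_mul_ι_mem_TU₁₃ hu hu' v)

theorem ι_mul_ι_mul_ι_mem_TU_of_mem_sup_span_singleton {w a b c : V}
    (ha : a ∈ U ⊔ ℂ ∙ w) (hb : b ∈ U ⊔ ℂ ∙ w) (hc : c ∈ U ⊔ ℂ ∙ w) :
    ι ℂ a * ι ℂ b * ι ℂ c ∈ TU U := by
  obtain ⟨x, hx, _, hα, rfl⟩ := Submodule.mem_sup.1 ha
  obtain ⟨y, hy, _, hβ, rfl⟩ := Submodule.mem_sup.1 hb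
  obtain ⟨z, hz, _, hγ, rfl⟩ := Submodule.mem_sup.1 hc
  obtain ⟨α, rfl⟩ := Submodule.mem_span_singleton.1 hα
  obtain ⟨β, rfl⟩ := Submodule.mem_span_singleton.1 hβ
  obtain ⟨γ, rfl⟩ := Submodule.mem_span_singleton.1 hγ
  have hwvw : ∀ v, ι ℂ w * ι ℂ v * ι ℂ w = 0 := fun v => by
    rw [mul_assoc, eq_neg_of_add_eq_zero_left (ι_add_mul_swap v w), mul_neg, ← mul_assoc,
      ι_sq_zero, zero_mul, neg_zero]
  have hxww : ι ℂ x * ι ℂ w * ι ℂ w = 0 := by rw [mul_assoc, ι_sq_zero, mul_zero]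
  have expand : ι ℂ (x + α • w) * ι ℂ (y + β • w) * ι ℂ (z + γ • w) =
      ι ℂ x * ι ℂ y * ι ℂ (z + γ • w) + β • (ι ℂ x * ι ℂ w * ι ℂ z) +
        α • (ι ℂ w * ι ℂ y * ι ℂ z) := by
    simp only [map_add, map_smul, add_mul, mul_add, smul_mul_assoc, mul_smul_comm, ι_sq_zero,
      hwvw, hxww, smul_zero, add_zero]
    abel
  rw [expand]
  exact add_mem (add_mem (ι_mul_ι_mul_ι_mem_TU₁₂ hx hy _)
    (Submodule.smul_mem _ _ (ι_mul_ι_mul_ι_mem_TU₁₃ hx hz w)))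
    (Submodule.smul_mem _ _ (ι_mul_ι_mul_ι_mem_TU₂₃ hy hz w))

theorem cube_le_TU_of_le_sup_span_singleton {U' : Submodule ℂ V} {w : V}
    (h : U' ≤ U ⊔ ℂ ∙ w) : cube U' ≤ TU U := by
  rw [cube, Submodule.span_le]
  rintro _ ⟨a, ha, b, hb, c, hc, rfl⟩
  exact ι_mul_ι_mul_ι_mem_TU_of_mem_sup_span_singleton (h ha) (h hb) (h hc)

theorem tripleForm_eq_zero_of_mem_TU (f₀ : Module.Dual ℂ V) {f₁ f₂ : Module.Dual ℂ V}
    (hf₁ : U ≤ LinearMap.ker f₁) (hf₂ : U ≤ LinearMap.ker f₂) {x : ExteriorAlgebra ℂ V}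
    (hx : x ∈ TU U) : tripleForm f₀ f₁ f₂ x = 0 := by
  refine (Submodule.span_le (p := LinearMap.ker (tripleForm f₀ f₁ f₂))).2 ?_ hx
  rintro _ ⟨u, hu, u', hu', v, rfl⟩
  simp [tripleForm_ι_mul_ι_mul_ι, Matrix.det_fin_three, LinearMap.mem_ker.1 (hf₁ hu),
    LinearMap.mem_ker.1 (hf₁ hu'), LinearMap.mem_ker.1 (hf₂ hu), LinearMap.mem_ker.1 (hf₂ hu')]

theorem not_cube_le_TU_of_finrank_inf_le_one [FiniteDimensional ℂ V] {U' : Submodule ℂ V}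
    (hU' : finrank ℂ U' = 3) (h : finrank ℂ ↥(U ⊓ U') ≤ 1) : ¬ cube U' ≤ TU U := by
  obtain ⟨v₁, hv₁U', hv₁⟩ :=
    exists_mem_notMem_of_finrank_inf_lt (U' := U') (P := U) (by rw [inf_comm]; omega)
  obtain ⟨v₂, hv₂U', hv₂⟩ := exists_mem_notMem_of_finrank_inf_lt (U' := U') (P := U ⊔ ℂ ∙ v₁)
    (by have := finrank_inf_sup_span_singleton_le (U := U) hv₁U'; omega)
  obtain ⟨v₀, hv₀U', hv₀⟩ :=
    exists_mem_notMem_of_finrank_inf_lt (U' := U') (P := Submodule.span ℂ (Set.range ![v₁, v₂]))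
      (((Submodule.finrank_mono inf_le_right).trans (finrank_range_le_card ![v₁, v₂])).trans_lt
        (by simp [hU']))
  obtain ⟨f₀, hf₀v₀, hf₀⟩ := Submodule.exists_le_ker_of_notMem hv₀
  obtain ⟨f₁, hf₁v₁, hf₁⟩ := Submodule.exists_le_ker_of_notMem hv₁
  obtain ⟨f₂, hf₂v₂, hf₂⟩ := Submodule.exists_le_ker_of_notMem hv₂
  have hf₀v₁ : f₀ v₁ = 0 := hf₀ (Submodule.subset_span ⟨0, rfl⟩)
  have hf₀v₂ : f₀ v₂ = 0 := hf₀ (Submodule.subset_span ⟨1, rfl⟩)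
  have hf₂v₁ : f₂ v₁ = 0 := hf₂ (Submodule.mem_sup_right (Submodule.mem_span_singleton_self v₁))
  intro hle
  have hzero := tripleForm_eq_zero_of_mem_TU f₀ hf₁ (le_sup_left.trans hf₂)
    (hle (Submodule.subset_span ⟨v₀, hv₀U', v₁, hv₁U', v₂, hv₂U', rfl⟩))
  simp [tripleForm_ι_mul_ι_mul_ι, Matrix.det_fin_three, hf₀v₁, hf₀v₂, hf₂v₁, hf₀v₀, hf₁v₁,
    hf₂v₂] at hzero

end TangentSpace

theorem statement3_general (V : Type*) [AddCommGroup V] [Module ℂ V] [FiniteDimensional ℂ V]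
    (U U' : Submodule ℂ V) (hU' : finrank ℂ U' = 3) :
    cube U' ≤ TU U ↔ 2 ≤ finrank ℂ ↥(U ⊓ U') := by
  constructor
  · intro hle
    by_contra hlt
    exact not_cube_le_TU_of_finrank_inf_le_one hU' (by omega) hle
  · intro h
    obtain ⟨w, hw⟩ := exists_le_sup_span_singleton_of_finrank_le (U := U) (U' := U') (by omega)
    exact cube_le_TU_of_le_sup_span_singleton hw

/-- For 3-dimensional subspaces `U, U'` of the 6-dimensional space `V`,
the line `⋀³U'` is contained in `T_U` if and only if `dim (U ∩ U') ≥ 2`. -/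
theorem statement3 (V : Type*) [AddCommGroup V] [Module ℂ V] [FiniteDimensional ℂ V]
    (h6 : finrank ℂ V = 6)
    (U U' : Submodule ℂ V) (hU : finrank ℂ U = 3) (hU' : finrank ℂ U' = 3) :
    cube U' ≤ TU U ↔ 2 ≤ finrank ℂ ↥(U ⊓ U') :=
  statement3_general V U U' hU'
end
end

section
/- Let U and U' be 3-dimensional subspaces of V. Then T_U ∩ T_{U'} = 0 if and only if U ∩ U' = 0. -/
/-!
If `w ≠ 0` lies in `U ∩ U'`, extend it to independent vectors `w, u, u'` with `u ∈ U`,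
`u' ∈ U'`; then `w ∧ u ∧ u' = -(w ∧ u' ∧ u)` is a nonzero element of `T_U ∩ T_U'`.

Conversely, if `U ∩ U' = 0`, pick a linear `p` that fixes `U` pointwise and kills `U'`, and let
`g_t = p + t (1 - p)` act on `⋀V`. On `T_U` the action of `g_t` is affine in `t`, while on `T_U'`
it only has `t²` and `t³` terms, because two of the three factors get scaled by `t`. An element
of both must therefore have `g_t x = 0` for all `t`, and `t = 1` gives `x = 0`.
-/

open ExteriorAlgebra Module

noncomputable section

variable {V : Type*} [AddCommGroup V] [Module ℂ V]

theorem ExteriorAlgebra.ιMulti_ne_zero_of_linearIndependent {K E : Type*} [Field K]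
    [AddCommGroup E] [Module K E] {n : ℕ} {v : Fin n → E} (hv : LinearIndependent K v) :
    ιMulti K n v ≠ 0 := by
  have := (exteriorPower.ιMulti_family_linearIndependent_field (n := n) hv).ne_zero
    (Set.powersetCard.ofFinEmbEquiv (OrderIso.refl (Fin n)).toOrderEmbedding)
  simp only [exteriorPower.ιMulti_family, Equiv.symm_apply_apply] at this
  exact fun h => this (Subtype.ext h)

theorem exists_mem_linearIndependent_snoc {K E : Type*} [Field K] [AddCommGroup E] [Module K E]
    {n : ℕ} {v : Fin n → E} (hv : LinearIndependent K v) {W : Submodule K E}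
    (hW : n < finrank K W) : ∃ x ∈ W, LinearIndependent K (Fin.snoc v x) := by
  by_contra! h
  have hle : W ≤ Submodule.span K (Set.range v) := fun x hx => by
    by_contra hx'
    exact h x hx (linearIndependent_finSnoc.mpr ⟨hv, hx'⟩)
  have := Module.Finite.span_of_finite K (Set.finite_range v)
  have := (Submodule.finrank_mono hle).trans (finrank_range_le_card v)
  rw [Fintype.card_fin] at this
  omega

theorem exists_retraction_of_disjoint {K E : Type*} [Field K] [AddCommGroup E] [Module K E]
    {U U' : Submodule K E} (h : Disjoint U U') :
    ∃ p : E →ₗ[K] E, (∀ u ∈ U, p u = u) ∧ ∀ w ∈ U', p w = 0 := by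
  have hinj : LinearMap.ker (U'.mkQ ∘ₗ U.subtype) = ⊥ := by
    rw [LinearMap.ker_comp, Submodule.ker_mkQ]
    exact Submodule.disjoint_iff_comap_eq_bot.mp h
  obtain ⟨r, hr⟩ := LinearMap.exists_leftInverse_of_injective _ hinj
  refine ⟨U.subtype ∘ₗ r ∘ₗ U'.mkQ, fun u hu => ?_, fun w hw => ?_⟩
  · simpa using congrArg Subtype.val (LinearMap.congr_fun hr ⟨u, hu⟩)
  · simp [(Submodule.Quotient.mk_eq_zero U').mpr hw]

theorem eq_zero_of_affine_eq_cubic {K M : Type*} [Field K] [CharZero K] [AddCommGroup M]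
    [Module K M] {A B C D : M} (h : ∀ t : K, C + t • D = t ^ 2 • A + t ^ 3 • B) :
    A = 0 ∧ B = 0 := by
  have h0 := h 0
  have h1 := h 1
  have hm := h (-1)
  have h2 := h 2
  constructor
  · linear_combination (norm := module) (-(1/2) : K) • (h1 + hm) + h0
  · linear_combination (norm := module)
      (-(1/6) : K) • (h2 - (2:K) • h1 + h0) + (1/6 : K) • (h1 + hm) - (1/3 : K) • h0

/-- For a retraction `p` onto `U` vanishing on `U'`, this is the identity on `U` and
multiplication by `t` on `U'`. -/
def dilationAlong (p : V →ₗ[ℂ] V) (t : ℂ) : V →ₗ[ℂ] V := p + t • (LinearMap.id - p)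

theorem dilationAlong_apply (p : V →ₗ[ℂ] V) (t : ℂ) (v : V) :
    dilationAlong p t v = p v + t • (v - p v) := rfl

theorem dilationAlong_one (p : V →ₗ[ℂ] V) : dilationAlong p 1 = LinearMap.id := by
  ext v
  simp [dilationAlong_apply]

theorem map_ι_mul_ι_mul_ι (f : V →ₗ[ℂ] V) (a b c : V) :
    ExteriorAlgebra.map f (ι ℂ a * ι ℂ b * ι ℂ c) = ι ℂ (f a) * ι ℂ (f b) * ι ℂ (f c) := by
  simp only [map_mul, ExteriorAlgebra.map_apply_ι]

theorem map_dilationAlong_of_mem_TU {U : Submodule ℂ V} {p : V →ₗ[ℂ] V}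
    (hp : ∀ u ∈ U, p u = u) {x : ExteriorAlgebra ℂ V} (hx : x ∈ TU U) :
    ∃ C D, ∀ t : ℂ, ExteriorAlgebra.map (dilationAlong p t) x = C + t • D := by
  induction hx using Submodule.span_induction with
  | mem x hx =>
    obtain ⟨u, hu, u', hu', v, rfl⟩ := hx
    refine ⟨ι ℂ u * ι ℂ u' * ι ℂ (p v), ι ℂ u * ι ℂ u' * ι ℂ (v - p v), fun t => ?_⟩
    have hfix : ∀ a ∈ U, dilationAlong p t a = a := fun a ha => by
      simp [dilationAlong_apply, hp a ha]
    rw [map_ι_mul_ι_mul_ι, hfix u hu, hfix u' hu', dilationAlong_apply, map_add, map_smul,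
      mul_add, mul_smul_comm]
  | zero => exact ⟨0, 0, fun t => by simp⟩
  | add x y _ _ hx hy =>
    obtain ⟨C, D, h⟩ := hx
    obtain ⟨C', D', h'⟩ := hy
    exact ⟨C + C', D + D', fun t => by rw [map_add, h, h']; module⟩
  | smul c x _ hx =>
    obtain ⟨C, D, h⟩ := hx
    exact ⟨c • C, c • D, fun t => by rw [map_smul, h]; module⟩

theorem map_dilationAlong_of_mem_TU_of_eq_zero {U' : Submodule ℂ V} {p : V →ₗ[ℂ] V}
    (hp : ∀ w ∈ U', p w = 0) {x : ExteriorAlgebra ℂ V} (hx : x ∈ TU U') :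
    ∃ A B, ∀ t : ℂ, ExteriorAlgebra.map (dilationAlong p t) x = t ^ 2 • A + t ^ 3 • B := by
  induction hx using Submodule.span_induction with
  | mem x hx =>
    obtain ⟨w, hw, w', hw', v, rfl⟩ := hx
    refine ⟨ι ℂ w * ι ℂ w' * ι ℂ (p v), ι ℂ w * ι ℂ w' * ι ℂ (v - p v), fun t => ?_⟩
    have hscale : ∀ a ∈ U', dilationAlong p t a = t • a := fun a ha => by
      simp [dilationAlong_apply, hp a ha]
    rw [map_ι_mul_ι_mul_ι, hscale w hw, hscale w' hw', dilationAlong_apply]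
    simp only [map_add, map_smul, mul_add, mul_smul_comm, smul_mul_assoc, smul_smul]
    module
  | zero => exact ⟨0, 0, fun t => by simp⟩
  | add x y _ _ hx hy =>
    obtain ⟨A, B, h⟩ := hx
    obtain ⟨A', B', h'⟩ := hy
    exact ⟨A + A', B + B', fun t => by rw [map_add, h, h']; module⟩
  | smul c x _ hx =>
    obtain ⟨A, B, h⟩ := hx
    exact ⟨c • A, c • B, fun t => by rw [map_smul, h]; module⟩

theorem TU_inf_TU_eq_bot_of_disjoint {U U' : Submodule ℂ V} (h : Disjoint U U') :
    TU U ⊓ TU U' = ⊥ := by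
  obtain ⟨p, hpU, hpU'⟩ := exists_retraction_of_disjoint h
  refine eq_bot_iff.mpr fun x ⟨hx, hx'⟩ => (Submodule.mem_bot ℂ).mpr ?_
  obtain ⟨C, D, hCD⟩ := map_dilationAlong_of_mem_TU hpU hx
  obtain ⟨A, B, hAB⟩ := map_dilationAlong_of_mem_TU_of_eq_zero hpU' hx'
  obtain ⟨rfl, rfl⟩ := eq_zero_of_affine_eq_cubic fun t => (hCD t).symm.trans (hAB t)
  simpa [dilationAlong_one] using hAB 1

theorem ι_mul_ι_mul_ι_mem_TU_inf_TU {U U' : Submodule ℂ V} {w u u' : V} (hw : w ∈ U ⊓ U')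
    (hu : u ∈ U) (hu' : u' ∈ U') : ι ℂ w * ι ℂ u * ι ℂ u' ∈ TU U ⊓ TU U' := by
  refine ⟨Submodule.subset_span ⟨w, hw.1, u, hu, u', rfl⟩, ?_⟩
  have hswap : ι ℂ w * ι ℂ u * ι ℂ u' = -(ι ℂ w * ι ℂ u' * ι ℂ u) := by
    rw [mul_assoc, ← neg_eq_of_add_eq_zero_left (ι_add_mul_swap u u'), mul_neg, mul_assoc]
  rw [hswap]
  exact neg_mem (Submodule.subset_span ⟨w, hw.2, u', hu', u, rfl⟩)

theorem TU_inf_TU_ne_bot {U U' : Submodule ℂ V} (h : U ⊓ U' ≠ ⊥) (hU : 1 < finrank ℂ U)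
    (hU' : 2 < finrank ℂ U') : TU U ⊓ TU U' ≠ ⊥ := by
  obtain ⟨w, hw, hw0⟩ := (Submodule.ne_bot_iff _).mp h
  obtain ⟨u, hu, hwu⟩ :=
    exists_mem_linearIndependent_snoc (LinearIndependent.of_subsingleton (v := ![w]) 0 hw0) hU
  obtain ⟨u', hu', hwuu'⟩ := exists_mem_linearIndependent_snoc hwu hU'
  have hne : ι ℂ w * ι ℂ u * ι ℂ u' ≠ 0 := by
    simpa [ιMulti_apply, List.ofFn_succ, mul_assoc] using
      ExteriorAlgebra.ιMulti_ne_zero_of_linearIndependent hwuu'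
  exact (Submodule.ne_bot_iff _).mpr ⟨_, ι_mul_ι_mul_ι_mem_TU_inf_TU hw hu hu', hne⟩

theorem statement4_general (V : Type*) [AddCommGroup V] [Module ℂ V]
    (U U' : Submodule ℂ V) (hU : finrank ℂ U = 3) (hU' : finrank ℂ U' = 3) :
    TU U ⊓ TU U' = ⊥ ↔ U ⊓ U' = ⊥ :=
  ⟨not_imp_not.mp fun h => TU_inf_TU_ne_bot h (by omega) (by omega),
    fun h => TU_inf_TU_eq_bot_of_disjoint (disjoint_iff.mpr h)⟩

/-- For 3-dimensional subspaces `U, U'` of the 6-dimensional space `V`,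
`T_U ∩ T_U' = 0` if and only if `U ∩ U' = 0`. -/
theorem statement4 (V : Type*) [AddCommGroup V] [Module ℂ V] [FiniteDimensional ℂ V]
    (h6 : finrank ℂ V = 6)
    (U U' : Submodule ℂ V) (hU : finrank ℂ U = 3) (hU' : finrank ℂ U' = 3) :
    TU U ⊓ TU U' = ⊥ ↔ U ⊓ U' = ⊥ :=
  statement4_general V U U' hU hU'
end
end

section
/- For nonzero vectors v, w ∈ V₄, the subspaces F_v := V₂∧V₄∧v and F_w := V₂∧V₄∧w of V_{2,4} are equal if and only if w is a scalar multiple of v. Consequently, the map [v] ↦ [F_v] from the projective space ℙ(V₄) to the set of Lagrangian subspaces of (V_{2,4}, η_{2,4}) is injective. -/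
/-!
If `v, w ∈ V₄` are independent, choose `x ∈ V₂` and `u ∈ V₄` with `x, u, v, w` independent
(possible since `V₂ ∩ V₄ = 0` and `dim V₄ > 2`). Linear forms vanishing at `w` and dual to
`x, u, v` give a 3-form on `V` that kills every `a ∧ b ∧ w`, hence all of `F_w`, but not
`x ∧ u ∧ v ∈ F_v`.
-/

open ExteriorAlgebra Module

noncomputable section

variable {V : Type*} [AddCommGroup V] [Module ℂ V]

/-- `F_v = V₂ ∧ V₄ ∧ v`: the subspace spanned by all `x ∧ w ∧ v` with `x ∈ V₂`, `w ∈ V₄`. -/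
def Fv24 (V₂ V₄ : Submodule ℂ V) (v : V) : Submodule ℂ (ExteriorAlgebra ℂ V) :=
  Submodule.span ℂ {y | ∃ x ∈ V₂, ∃ w ∈ V₄, y = ι ℂ x * ι ℂ w * ι ℂ v}

open Submodule

section
variable {K M : Type*} [Field K] [AddCommGroup M] [Module K M]

theorem LinearIndependent.exists_linearMap_apply_eq_single {n : ℕ} {f : Fin n → M}
    (hf : LinearIndependent K f) : ∃ g : M →ₗ[K] Fin n → K, ∀ i, g (f i) = Pi.single i 1 := by
  obtain ⟨g, hg⟩ := LinearMap.exists_extend (Finsupp.lcoeFun ∘ₗ hf.repr)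
  refine ⟨g, fun i => ?_⟩
  have := congr($hg ⟨f i, subset_span (Set.mem_range_self i)⟩)
  simpa [hf.repr_eq_single i, Finsupp.single_eq_pi_single] using this

theorem liftAlternating_update_ι_mul_ι_mul_ι {N : Type*} [AddCommGroup N] [Module K N]
    (φ : M [⋀^Fin 3]→ₗ[K] N) (a b c : M) :
    liftAlternating (Function.update 0 3 φ) (ι K a * ι K b * ι K c) = φ ![a, b, c] := by
  have : ι K a * ι K b * ι K c = ιMulti K 3 ![a, b, c] := by
    simp [ιMulti_apply, mul_assoc]
  rw [this, liftAlternating_apply_ιMulti, Function.update_self]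

theorem exists_linearMap_exteriorAlgebra_separating {x u v w : M}
    (h : LinearIndependent K ![x, u, v, w]) :
    ∃ L : ExteriorAlgebra K M →ₗ[K] K,
      L (ι K x * ι K u * ι K v) = 1 ∧ ∀ a b, L (ι K a * ι K b * ι K w) = 0 := by
  obtain ⟨g, hg⟩ := h.exists_linearMap_apply_eq_single
  set p := LinearMap.funLeft K K Fin.castSucc ∘ₗ g
  have hp : ∀ i : Fin 3, p (![x, u, v] i) = Pi.single i 1 := fun i => by
    have hi : ![x, u, v] i = ![x, u, v, w] i.castSucc := by fin_cases i <;> rfl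
    funext j
    simp [p, hi, LinearMap.funLeft, hg, Pi.single_apply]
  have hpw : p w = 0 := by
    funext j
    simpa [p, LinearMap.funLeft, Pi.single_apply, Fin.ext_iff, j.isLt.ne] using
      congr_fun (hg 3) j.castSucc
  refine ⟨liftAlternating (Function.update 0 3 ((Pi.basisFun K (Fin 3)).det.compLinearMap p)),
    ?_, fun a b => ?_⟩
  · rw [liftAlternating_update_ι_mul_ι_mul_ι, AlternatingMap.compLinearMap_apply]
    convert (Pi.basisFun K (Fin 3)).det_self
    funext i
    simp [hp]
  · rw [liftAlternating_update_ι_mul_ι_mul_ι, AlternatingMap.compLinearMap_apply]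
    exact AlternatingMap.map_coord_zero _ 2 hpw

theorem exists_linearIndependent_of_disjoint {V₂ V₄ : Submodule K M} (hdisj : Disjoint V₂ V₄)
    (hV₂ : V₂ ≠ ⊥) (hV₄ : 2 < finrank K V₄) {v w : M} (hv : v ∈ V₄) (hw : w ∈ V₄)
    (hvw : LinearIndependent K ![v, w]) :
    ∃ x ∈ V₂, ∃ u ∈ V₄, LinearIndependent K ![x, u, v, w] := by
  obtain ⟨x, hx, hx0⟩ := exists_mem_ne_zero_of_ne_bot hV₂
  have huvw : ¬V₄ ≤ span K (Set.range ![v, w]) := fun hle => by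
    have := FiniteDimensional.span_of_finite K (Set.finite_range ![v, w])
    have := (Submodule.finrank_mono hle).trans (finrank_range_le_card (R := K) ![v, w])
    rw [Fintype.card_fin] at this
    omega
  obtain ⟨u, hu, hu_span⟩ := SetLike.not_le_iff_exists.1 huvw
  refine ⟨x, hx, u, hu, linearIndependent_finCons.2 ⟨linearIndependent_finCons.2 ⟨hvw, ?_⟩, ?_⟩⟩
  · simpa using hu_span
  · intro hx_span
    refine hx0 (disjoint_def.1 hdisj x hx (span_le.2 ?_ hx_span))
    rintro _ ⟨i, rfl⟩
    fin_cases i <;> assumption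

end

theorem Fv24_smul_le (V₂ V₄ : Submodule ℂ V) (v : V) (c : ℂ) :
    Fv24 V₂ V₄ (c • v) ≤ Fv24 V₂ V₄ v := by
  rw [Fv24, span_le]
  rintro _ ⟨x, hx, u, hu, rfl⟩
  rw [map_smul, mul_smul_comm]
  exact smul_mem _ c (subset_span ⟨x, hx, u, hu, rfl⟩)

theorem Fv24_smul (V₂ V₄ : Submodule ℂ V) (v : V) {c : ℂ} (hc : c ≠ 0) :
    Fv24 V₂ V₄ (c • v) = Fv24 V₂ V₄ v := by
  refine le_antisymm (Fv24_smul_le V₂ V₄ v c) ?_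
  simpa [smul_smul, hc] using Fv24_smul_le V₂ V₄ (c • v) c⁻¹

theorem ι_mul_ι_mul_ι_notMem_Fv24 (V₂ V₄ : Submodule ℂ V) {x u v w : V}
    (h : LinearIndependent ℂ ![x, u, v, w]) : ι ℂ x * ι ℂ u * ι ℂ v ∉ Fv24 V₂ V₄ w := by
  obtain ⟨L, hL, hLw⟩ := exists_linearMap_exteriorAlgebra_separating h
  have hker : Fv24 V₂ V₄ w ≤ LinearMap.ker L := by
    rw [Fv24, span_le]
    rintro _ ⟨a, -, b, -, rfl⟩
    exact hLw a b
  intro hmem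
  simpa [hL] using hker hmem

theorem statement11_general (V : Type*) [AddCommGroup V] [Module ℂ V]
    (V₂ V₄ : Submodule ℂ V) (hV₂ : finrank ℂ V₂ = 2) (hV₄ : finrank ℂ V₄ = 4)
    (hcompl : IsCompl V₂ V₄)
    (v w : V) (hvV₄ : v ∈ V₄) (hwV₄ : w ∈ V₄) (hv : v ≠ 0) (hw : w ≠ 0) :
    Fv24 V₂ V₄ v = Fv24 V₂ V₄ w ↔ ∃ c : ℂ, w = c • v := by
  constructor
  · intro heq
    by_contra hdep
    have hvw : LinearIndependent ℂ ![v, w] :=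
      (LinearIndependent.pair_iff' hv).2 fun c hc => hdep ⟨c, hc.symm⟩
    have hV₂_ne : V₂ ≠ ⊥ := by rintro rfl; simp at hV₂
    obtain ⟨x, hx, u, hu, hli⟩ := exists_linearIndependent_of_disjoint hcompl.disjoint hV₂_ne
      (by omega) hvV₄ hwV₄ hvw
    exact ι_mul_ι_mul_ι_notMem_Fv24 V₂ V₄ hli (heq ▸ subset_span ⟨x, hx, u, hu, rfl⟩)
  · rintro ⟨c, rfl⟩
    have hc : c ≠ 0 := by rintro rfl; simp at hw
    exact (Fv24_smul V₂ V₄ v hc).symm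

/-- Let `V = V₂ ⊕ V₄` with `dim V₂ = 2`, `dim V₄ = 4`. For nonzero
`v, w ∈ V₄`, the subspaces `F_v` and `F_w` of `V_{2,4}` are equal if and only if `w` is a
scalar multiple of `v`; consequently `[v] ↦ [F_v]` is injective on `ℙ(V₄)`. -/
theorem statement11 (V : Type*) [AddCommGroup V] [Module ℂ V] [FiniteDimensional ℂ V]
    (h6 : finrank ℂ V = 6)
    (V₂ V₄ : Submodule ℂ V) (hV₂ : finrank ℂ V₂ = 2) (hV₄ : finrank ℂ V₄ = 4)
    (hcompl : IsCompl V₂ V₄)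
    (v w : V) (hvV₄ : v ∈ V₄) (hwV₄ : w ∈ V₄) (hv : v ≠ 0) (hw : w ≠ 0) :
    Fv24 V₂ V₄ v = Fv24 V₂ V₄ w ↔ ∃ c : ℂ, w = c • v :=
  statement11_general V V₂ V₄ hV₂ hV₄ hcompl v w hvV₄ hwV₄ hv hw
end
end

section
/- Let V₂, V₃ be complex subspaces of a vector space V with dim V₂ = 2, dim V₃ = 3, and let v₀ ∈ V be such that V = V₂ ⊕ ℂv₀ ⊕ V₃. Let α be an element of the subspace of ⋀²V spanned by all x∧y with x ∈ V₂, y ∈ V₃, let β be an element of the subspace of ⋀³V spanned by all x∧y∧z with x ∈ V₂, y,z ∈ V₃, and let v ∈ V₃ and λ ∈ ℂ. Then (v₀∧α + β)∧(v + λv₀) = 0 in ⋀⁴V if and only if β∧v = 0 and α∧v = λβ. -/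
/-!
Choose a functional `φ` with `φ v₀ = 1` vanishing on `V₂ ⊕ V₃`; contraction with `φ` is an
antiderivation of the exterior algebra that kills everything built from `V₂ ⊕ V₃`. Moving `v₀`
to the front using graded commutativity (`α` is even, `β` is odd) gives
`(v₀∧α + β)∧(v + λv₀) = v₀∧(α∧v - λβ) + β∧v`, and contracting with `φ` separates the two
summands: the sum vanishes iff `α∧v - λβ = 0` and `β∧v = 0`.
-/

open ExteriorAlgebra Module

namespace ExteriorAlgebra

variable {R M N : Type*} [CommRing R] [AddCommGroup M] [Module R M] [AddCommGroup N] [Module R N]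

theorem ι_mem_exteriorPower_one (m : M) : ι R m ∈ ⋀[R]^1 M := by
  rw [exteriorPower, pow_one]
  exact LinearMap.mem_range_self _ m

theorem mul_ι_mem_exteriorPower_succ {n : ℕ} {x : ExteriorAlgebra R M} (hx : x ∈ ⋀[R]^n M)
    (m : M) : x * ι R m ∈ ⋀[R]^(n + 1) M := by
  rw [exteriorPower, pow_succ]
  exact Submodule.mul_mem_mul hx (LinearMap.mem_range_self _ m)

theorem mul_ι_of_mem_exteriorPower {n : ℕ} {x : ExteriorAlgebra R M} (hx : x ∈ ⋀[R]^n M)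
    (m : M) : x * ι R m = (-1 : R) ^ n • (ι R m * x) := by
  induction hx using Submodule.pow_induction_on_left' with
  | algebraMap r => rw [Algebra.commutes, pow_zero, one_smul]
  | add x y i _ _ hx hy => rw [add_mul, hx, hy, mul_add, smul_add]
  | mem_mul a ha i x _ hx =>
    obtain ⟨u, rfl⟩ := ha
    rw [mul_assoc, hx, mul_smul_comm, ← mul_assoc, eq_neg_of_add_eq_zero_left (ι_add_mul_swap u m),
      neg_mul, smul_neg, pow_succ, mul_neg_one, neg_smul, mul_assoc]

theorem ι_mul_add_mul_ι_add_smul {α β : ExteriorAlgebra R M} (hα : α ∈ ⋀[R]^2 M)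
    (hβ : β ∈ ⋀[R]^3 M) (v₀ v : M) (c : R) :
    (ι R v₀ * α + β) * ι R (v + c • v₀) = ι R v₀ * (α * ι R v - c • β) + β * ι R v := by
  have hαv₀ : α * ι R v₀ = ι R v₀ * α := by
    rw [mul_ι_of_mem_exteriorPower hα, neg_one_sq, one_smul]
  have hβv₀ : β * ι R v₀ = -(ι R v₀ * β) := by
    rw [mul_ι_of_mem_exteriorPower hβ, pow_succ, neg_one_sq, one_mul, neg_one_smul]
  rw [map_add, map_smul, mul_add, add_mul, add_mul, mul_smul_comm, mul_smul_comm,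
    mul_assoc (ι R v₀) α (ι R v₀), hαv₀, ← mul_assoc, ι_sq_zero, zero_mul, hβv₀, mul_sub,
    mul_smul_comm, ← mul_assoc, smul_zero, zero_add, smul_neg, sub_eq_add_neg]
  abel

theorem ι_mem_range_map_subtype {W : Submodule R M} {w : M} (hw : w ∈ W) :
    ι R w ∈ (map W.subtype).range :=
  ⟨ι R ⟨w, hw⟩, map_apply_ι _ _⟩

theorem contractLeft_eq_zero_of_mem_range_map {f : N →ₗ[R] M} {φ : Dual R M}
    (hφ : φ ∘ₗ f = 0) {x : ExteriorAlgebra R M} (hx : x ∈ (map f).range) :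
    CliffordAlgebra.contractLeft (Q := 0) φ x = 0 := by
  obtain ⟨y, rfl⟩ := (AlgHom.mem_range _).1 hx
  clear hx
  induction y using CliffordAlgebra.left_induction with
  | algebraMap r => rw [AlgHom.commutes, CliffordAlgebra.contractLeft_algebraMap]
  | add x y hx hy => rw [map_add, map_add, hx, hy, add_zero]
  | ι_mul x n hx =>
    rw [map_mul, map_apply_ι, CliffordAlgebra.contractLeft_ι_mul, hx, mul_zero, sub_zero,
      ← LinearMap.comp_apply, hφ, LinearMap.zero_apply, zero_smul]

theorem ι_mul_add_eq_zero_iff {φ : Dual R M} {v₀ : M} (hφv₀ : φ v₀ = 1)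
    {x y : ExteriorAlgebra R M} (hx : CliffordAlgebra.contractLeft (Q := 0) φ x = 0)
    (hy : CliffordAlgebra.contractLeft (Q := 0) φ y = 0) :
    ι R v₀ * x + y = 0 ↔ x = 0 ∧ y = 0 := by
  refine ⟨fun h ↦ ?_, fun ⟨hx0, hy0⟩ ↦ by rw [hx0, hy0, mul_zero, add_zero]⟩
  have hx0 : x = 0 := by
    simpa [CliffordAlgebra.contractLeft_ι_mul, hφv₀, hx, hy] using
      congrArg (CliffordAlgebra.contractLeft (Q := 0) φ) h
  exact ⟨hx0, by rwa [hx0, mul_zero, zero_add] at h⟩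

end ExteriorAlgebra

namespace Submodule

variable {K V : Type*} [Field K] [AddCommGroup V] [Module K V]

theorem exists_dual_eq_one_of_notMem {W : Submodule K V} {v₀ : V} (hv₀ : v₀ ∉ W) :
    ∃ φ : Dual K V, φ v₀ = 1 ∧ φ ∘ₗ W.subtype = 0 := by
  obtain ⟨φ, hφv₀, hφW⟩ := W.exists_dual_map_eq_bot_of_notMem hv₀ inferInstance
  refine ⟨(φ v₀)⁻¹ • φ, by simp [hφv₀], ?_⟩
  ext w
  have : φ w ∈ (⊥ : Submodule K K) := hφW ▸ mem_map_of_mem w.2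
  simp_all

theorem notMem_of_sup_span_singleton_eq_top [FiniteDimensional K V] {W : Submodule K V} {v : V}
    (h : W ⊔ K ∙ v = ⊤) (hW : finrank K W < finrank K V) : v ∉ W := by
  intro hv
  rw [sup_eq_left.2 ((span_singleton_le_iff_mem v W).2 hv)] at h
  rw [h, finrank_top] at hW
  exact hW.false

end Submodule

theorem statement12_general (V : Type*) [AddCommGroup V] [Module ℂ V] [FiniteDimensional ℂ V]
    (V₂ V₃ : Submodule ℂ V) (hV₂ : finrank ℂ V₂ = 2) (hV₃ : finrank ℂ V₃ = 3)
    (v₀ : V)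
    (hV : finrank ℂ V = 6)
    (hspan : V₂ ⊔ (ℂ ∙ v₀) ⊔ V₃ = ⊤)
    (α β : ExteriorAlgebra ℂ V)
    (hα : α ∈ Submodule.span ℂ
      {x : ExteriorAlgebra ℂ V | ∃ a ∈ V₂, ∃ b ∈ V₃, x = ι ℂ a * ι ℂ b})
    (hβ : β ∈ Submodule.span ℂ
      {x : ExteriorAlgebra ℂ V | ∃ a ∈ V₂, ∃ b ∈ V₃, ∃ c ∈ V₃, x = ι ℂ a * ι ℂ b * ι ℂ c})
    (v : V) (hv : v ∈ V₃) (lam : ℂ) :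
    (ι ℂ v₀ * α + β) * ι ℂ (v + lam • v₀) = 0 ↔
      (β * ι ℂ v = 0 ∧ α * ι ℂ v = lam • β) := by
  have hv₀W : v₀ ∉ V₂ ⊔ V₃ := by
    refine Submodule.notMem_of_sup_span_singleton_eq_top (by rwa [sup_right_comm] at hspan) ?_
    have := Submodule.finrank_add_le_finrank_add_finrank V₂ V₃
    omega
  set W := V₂ ⊔ V₃
  obtain ⟨φ, hφv₀, hφW⟩ := W.exists_dual_eq_one_of_notMem hv₀W
  set S := (map W.subtype).range
  have hW₂ {w : V} (hw : w ∈ V₂) : ι ℂ w ∈ S :=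
    ι_mem_range_map_subtype (Submodule.mem_sup_left hw)
  have hW₃ {w : V} (hw : w ∈ V₃) : ι ℂ w ∈ S :=
    ι_mem_range_map_subtype (Submodule.mem_sup_right hw)
  have hα' : α ∈ ⋀[ℂ]^2 V ⊓ Subalgebra.toSubmodule S := by
    refine Submodule.span_le.2 ?_ hα
    rintro _ ⟨a, ha, b, hb, rfl⟩
    exact ⟨mul_ι_mem_exteriorPower_succ (ι_mem_exteriorPower_one a) b,
      S.mul_mem (hW₂ ha) (hW₃ hb)⟩
  have hβ' : β ∈ ⋀[ℂ]^3 V ⊓ Subalgebra.toSubmodule S := by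
    refine Submodule.span_le.2 ?_ hβ
    rintro _ ⟨a, ha, b, hb, c, hc, rfl⟩
    exact ⟨mul_ι_mem_exteriorPower_succ
      (mul_ι_mem_exteriorPower_succ (ι_mem_exteriorPower_one a) b) c,
      S.mul_mem (S.mul_mem (hW₂ ha) (hW₃ hb)) (hW₃ hc)⟩
  have hαS : α ∈ S := hα'.2
  have hβS : β ∈ S := hβ'.2
  rw [ι_mul_add_mul_ι_add_smul hα'.1 hβ'.1, ι_mul_add_eq_zero_iff hφv₀
    (contractLeft_eq_zero_of_mem_range_map hφW
      (sub_mem (mul_mem hαS (hW₃ hv)) (Subalgebra.smul_mem _ hβS _)))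
    (contractLeft_eq_zero_of_mem_range_map hφW (mul_mem hβS (hW₃ hv))), sub_eq_zero, and_comm]

/-- Let `V = V₂ ⊕ ℂv₀ ⊕ V₃` with `dim V₂ = 2`, `dim V₃ = 3`. For
`α ∈ V₂∧V₃ ⊆ ⋀²V`, `β ∈ V₂∧⋀²V₃ ⊆ ⋀³V`, `v ∈ V₃` and `λ ∈ ℂ`, one has
`(v₀∧α + β)∧(v + λv₀) = 0` in `⋀⁴V` if and only if `β∧v = 0` and `α∧v = λβ`. -/
theorem statement12 (V : Type*) [AddCommGroup V] [Module ℂ V] [FiniteDimensional ℂ V]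
    (V₂ V₃ : Submodule ℂ V) (hV₂ : finrank ℂ V₂ = 2) (hV₃ : finrank ℂ V₃ = 3)
    (v₀ : V) (hv₀ : v₀ ≠ 0)
    (hV : finrank ℂ V = 6)
    (hspan : V₂ ⊔ (ℂ ∙ v₀) ⊔ V₃ = ⊤)
    (α β : ExteriorAlgebra ℂ V)
    (hα : α ∈ Submodule.span ℂ
      {x : ExteriorAlgebra ℂ V | ∃ a ∈ V₂, ∃ b ∈ V₃, x = ι ℂ a * ι ℂ b})
    (hβ : β ∈ Submodule.span ℂ
      {x : ExteriorAlgebra ℂ V | ∃ a ∈ V₂, ∃ b ∈ V₃, ∃ c ∈ V₃, x = ι ℂ a * ι ℂ b * ι ℂ c})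
    (v : V) (hv : v ∈ V₃) (lam : ℂ) :
    (ι ℂ v₀ * α + β) * ι ℂ (v + lam • v₀) = 0 ↔
      (β * ι ℂ v = 0 ∧ α * ι ℂ v = lam • β) :=
  statement12_general V V₂ V₃ hV₂ hV₃ v₀ hV hspan α β hα hβ v hv lam
end

section
/- Set β₁ = u₁∧v₁∧v₂, β₂ = u₂∧v₁∧v₃, β₃ = (u₁+u₂)∧v₁∧(v₂+v₃) in ⋀³V. Let α₁, α₂, α₃ be elements of ⋀²U₁∧U₂ such that (αᵢ+βᵢ)∧(αⱼ+βⱼ) = 0 in ⋀⁶V for all i,j ∈ {1,2,3}, and suppose there exists a complex number c such that vol(αᵢ∧βᵢ) = 0 for each i and vol(αᵢ∧βⱼ) = −c for all i ≠ j. Then the space of triples (λ₁,λ₂,λ₃) ∈ ℂ³ such that ω := λ₁(α₁+β₁) + λ₂(α₂+β₂) + λ₃(α₃+β₃) satisfies ω∧u₁∧u₂ = 0, ω∧u₁∧(v₁ + c·u₃) = 0 and ω∧u₂∧(v₁ + c·u₃) = 0 in ⋀⁵V is a linear subspace of ℂ³ of dimension at least 2. -/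
/-!
Write `ω = ∑ λᵢ (αᵢ + βᵢ)` as `α + β` with `α = ∑ λᵢ αᵢ ∈ ⋀²U₁ ∧ U₂` and `β = ∑ λᵢ βᵢ`. Four vectors of
the 3-dimensional space `U₁` wedge to zero, so `α ∧ u ∧ u' = 0` for `u, u' ∈ U₁`, while `α ∧ u ∧ v₁`
lies in the plane spanned by `e₂ = u₁∧u₂∧u₃∧v₁∧v₂` and `e₃ = u₁∧u₂∧u₃∧v₁∧v₃`, with coordinates
`vol(α ∧ u ∧ v₁ ∧ v₃)` and `-vol(α ∧ u ∧ v₁ ∧ v₂)`. Every `βᵢ` contains `v₁` and a factor from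
`span {u₁, u₂}`, so `β` only contributes through `β ∧ u ∧ u₃`. The hypotheses on `vol(αᵢ ∧ βⱼ)` fix all
coordinates but `vol(α ∧ u₁ ∧ v₁ ∧ v₃)` in terms of `λ`, and the three conditions collapse to the
single linear equation `vol(α ∧ u₁ ∧ v₁ ∧ v₃) = c λ₃`.
-/

open ExteriorAlgebra Module

noncomputable section

variable {V : Type*} [AddCommGroup V] [Module ℂ V]

/-- `⋀²U₁ ∧ U₂`: the subspace of `⋀³V` spanned by all `a ∧ b ∧ c` with `a, b ∈ U₁`,
`c ∈ U₂`. -/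
def wedge21 (U₁ U₂ : Submodule ℂ V) : Submodule ℂ (ExteriorAlgebra ℂ V) :=
  Submodule.span ℂ {x | ∃ a ∈ U₁, ∃ b ∈ U₁, ∃ c ∈ U₂, x = ι ℂ a * ι ℂ b * ι ℂ c}

namespace ExteriorAlgebra

section CommRing

variable {R M : Type*} [CommRing R] [AddCommGroup M] [Module R M]

theorem ι_mul_ι_anticomm (x y : M) : ι R y * ι R x = -(ι R x * ι R y) :=
  eq_neg_of_add_eq_zero_left <| by rw [add_comm]; exact ι_add_mul_swap x y

theorem ι_mul_ι_mul_anticomm (x y : M) (z : ExteriorAlgebra R M) :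
    ι R y * (ι R x * z) = -(ι R x * (ι R y * z)) := by
  rw [← mul_assoc, ι_mul_ι_anticomm, neg_mul, mul_assoc]

theorem ι_mul_ι_mul_self (x : M) (z : ExteriorAlgebra R M) : ι R x * (ι R x * z) = 0 := by
  rw [← mul_assoc, ι_sq_zero, zero_mul]

theorem commute_ι_mul_ι_ι (x y z : M) : Commute (ι R x * ι R y) (ι R z) := by
  simp only [Commute, SemiconjBy, mul_assoc, ι_mul_ι_mul_anticomm z, ι_mul_ι_anticomm z, mul_neg,
    neg_neg]

end CommRing

theorem ιMulti_eq_zero_of_finrank_lt {K M : Type*} [Field K] [AddCommGroup M] [Module K M]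
    {n : ℕ} (W : Submodule K M) [FiniteDimensional K W] {v : Fin n → M} (hv : ∀ i, v i ∈ W)
    (hW : finrank K W < n) : ιMulti K n v = 0 := by
  refine AlternatingMap.map_linearDependent _ v fun hli => hW.not_ge ?_
  have hspan : Submodule.span K (Set.range v) ≤ W := Submodule.span_le.2 (Set.range_subset_iff.2 hv)
  calc n = Fintype.card (Fin n) := (Fintype.card_fin n).symm
    _ ≤ (Set.range v).finrank K := linearIndependent_iff_card_le_finrank_span.1 hli
    _ ≤ finrank K W := Submodule.finrank_mono hspan

end ExteriorAlgebra

theorem LinearMap.finrank_le_finrank_ker_add_one {K V : Type*} [Field K] [AddCommGroup V]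
    [Module K V] [FiniteDimensional K V] (f : V →ₗ[K] K) :
    finrank K V ≤ finrank K (LinearMap.ker f) + 1 := by
  have hrange : finrank K (LinearMap.range f) ≤ 1 := by
    simpa using Submodule.finrank_le (LinearMap.range f)
  have := f.finrank_range_add_finrank_ker
  omega

theorem map_linearCombination_mul_eq {ι K A : Type*} [Fintype ι] [CommRing K] [Ring A]
    [Algebra K A] (f : A →ₗ[K] K) {α β : ι → A} {c : K} (hdiag : ∀ i, f (α i * β i) = 0)
    (hoff : ∀ i j, i ≠ j → f (α i * β j) = -c) (t : ι → K) (j : ι) :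
    f (Fintype.linearCombination K α t * β j) = -c * (∑ i, t i - t j) := by
  classical
  simp only [Fintype.linearCombination_apply, Finset.sum_mul, smul_mul_assoc, map_sum, map_smul,
    smul_eq_mul]
  rw [← Finset.add_sum_erase _ _ (Finset.mem_univ j), hdiag, Finset.sum_congr rfl fun i hi =>
    by rw [hoff i j (Finset.ne_of_mem_erase hi)], ← Finset.sum_mul,
    Finset.sum_erase_eq_sub (Finset.mem_univ j)]
  ring

section Wedge21

theorem mul_ι_mul_ι_eq_zero_of_mem_wedge21 {U₁ U₂ : Submodule ℂ V} [FiniteDimensional ℂ U₁]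
    (hU₁ : finrank ℂ U₁ < 4) {x : ExteriorAlgebra ℂ V} (hx : x ∈ wedge21 U₁ U₂) {w w' : V}
    (hw : w ∈ U₁) (hw' : w' ∈ U₁) : x * (ι ℂ w * ι ℂ w') = 0 := by
  induction hx using Submodule.span_induction with
  | mem _ hx =>
    obtain ⟨a, ha, b, hb, c, -, rfl⟩ := hx
    calc ι ℂ a * ι ℂ b * ι ℂ c * (ι ℂ w * ι ℂ w') = ι ℂ a * ι ℂ b * ι ℂ w * ι ℂ w' * ι ℂ c := by
          simp only [mul_assoc, ι_mul_ι_mul_anticomm w c, ι_mul_ι_anticomm w' c, mul_neg, neg_neg]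
      _ = ιMulti ℂ 4 ![a, b, w, w'] * ι ℂ c := by simp [ιMulti_apply, mul_assoc]
      _ = 0 := by
        rw [ιMulti_eq_zero_of_finrank_lt U₁ (fun i => by fin_cases i <;> assumption) hU₁, zero_mul]
  | zero => rw [zero_mul]
  | add x y _ _ hx hy => rw [add_mul, hx, hy, add_zero]
  | smul r x _ hx => rw [smul_mul_assoc, hx, smul_zero]

variable {u₁ u₂ u₃ : V}

theorem exists_ι_mul_ι_mul_ι_eq_smul {a b d : V} (ha : a ∈ Submodule.span ℂ {u₁, u₂, u₃})
    (hb : b ∈ Submodule.span ℂ {u₁, u₂, u₃}) (hd : d ∈ Submodule.span ℂ {u₁, u₂, u₃}) :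
    ∃ s : ℂ, ι ℂ a * ι ℂ b * ι ℂ d = s • (ι ℂ u₁ * ι ℂ u₂ * ι ℂ u₃) := by
  obtain ⟨a₁, a₂, a₃, rfl⟩ := Submodule.mem_span_triple.1 ha
  obtain ⟨b₁, b₂, b₃, rfl⟩ := Submodule.mem_span_triple.1 hb
  obtain ⟨d₁, d₂, d₃, rfl⟩ := Submodule.mem_span_triple.1 hd
  refine ⟨a₁ * (b₂ * d₃ - b₃ * d₂) - a₂ * (b₁ * d₃ - b₃ * d₁) + a₃ * (b₁ * d₂ - b₂ * d₁), ?_⟩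
  simp only [map_add, map_smul, add_mul, mul_add, smul_mul_assoc, mul_smul_comm, mul_assoc,
    ι_mul_ι_mul_anticomm u₁ u₂, ι_mul_ι_anticomm u₁ u₂, ι_mul_ι_anticomm u₁ u₃,
    ι_mul_ι_anticomm u₂ u₃,
    ι_mul_ι_mul_self, ι_sq_zero, mul_neg, neg_mul, neg_neg, neg_zero, mul_zero, smul_neg,
    smul_zero, add_zero, zero_add]
  module

variable {v₁ v₂ v₃ : V} {vol : ExteriorAlgebra ℂ V →ₗ[ℂ] ℂ}

theorem mul_ι_mul_ι_eq_of_mem_wedge21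
    (hvol : vol (ι ℂ u₁ * ι ℂ u₂ * ι ℂ u₃ * ι ℂ v₁ * ι ℂ v₂ * ι ℂ v₃) = 1)
    {x : ExteriorAlgebra ℂ V} (hx : x ∈ wedge21 (Submodule.span ℂ {u₁, u₂, u₃})
      (Submodule.span ℂ {v₁, v₂, v₃}))
    {w : V} (hw : w ∈ Submodule.span ℂ {u₁, u₂, u₃}) :
    x * (ι ℂ w * ι ℂ v₁) =
      vol (x * (ι ℂ w * ι ℂ v₁ * ι ℂ v₃)) • (ι ℂ u₁ * ι ℂ u₂ * ι ℂ u₃ * ι ℂ v₁ * ι ℂ v₂) -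
      vol (x * (ι ℂ w * ι ℂ v₁ * ι ℂ v₂)) • (ι ℂ u₁ * ι ℂ u₂ * ι ℂ u₃ * ι ℂ v₁ * ι ℂ v₃) := by
  simp only [mul_assoc] at hvol ⊢
  induction hx using Submodule.span_induction with
  | mem _ hx =>
    obtain ⟨a, ha, b, hb, c, hc, rfl⟩ := hx
    obtain ⟨s, hs⟩ := exists_ι_mul_ι_mul_ι_eq_smul ha hb hw
    have hmove : ∀ z, ι ℂ a * ι ℂ b * ι ℂ c * (ι ℂ w * z) =
        -(s • (ι ℂ u₁ * ι ℂ u₂ * ι ℂ u₃) * (ι ℂ c * z)) := fun z => by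
      rw [← hs]
      simp only [mul_assoc, ι_mul_ι_mul_anticomm w c, mul_neg]
    rw [hmove, hmove, hmove]
    obtain ⟨r₁, r₂, r₃, rfl⟩ := Submodule.mem_span_triple.1 hc
    simp only [map_add, map_smul, map_neg, add_mul, mul_add, smul_mul_assoc, mul_smul_comm,
      mul_assoc, ι_mul_ι_mul_anticomm v₁ v₂, ι_mul_ι_mul_anticomm v₁ v₃, ι_mul_ι_anticomm v₁ v₂,
      ι_mul_ι_anticomm v₁ v₃, ι_mul_ι_anticomm v₂ v₃, ι_mul_ι_mul_self, ι_sq_zero, mul_neg,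
      neg_neg, neg_zero, mul_zero, smul_neg, smul_zero, add_zero, zero_add, hvol, smul_eq_mul]
    module
  | zero => simp
  | add x y _ _ hx hy =>
    simp only [add_mul, map_add, hx, hy]
    module
  | smul r x _ hx =>
    simp only [smul_mul_assoc, map_smul, hx, smul_eq_mul]
    module

def betaComb (u₁ u₂ v₁ v₂ v₃ : V) (t : Fin 3 → ℂ) : ExteriorAlgebra ℂ V :=
  t 0 • (ι ℂ u₁ * ι ℂ v₁ * ι ℂ v₂) + t 1 • (ι ℂ u₂ * ι ℂ v₁ * ι ℂ v₃) +
    t 2 • (ι ℂ (u₁ + u₂) * ι ℂ v₁ * ι ℂ (v₂ + v₃))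

theorem betaComb_mul_ι_mul_ι (t : Fin 3 → ℂ) (w w' : V) :
    betaComb u₁ u₂ v₁ v₂ v₃ t * (ι ℂ w * ι ℂ w') =
      t 0 • (ι ℂ u₁ * ι ℂ w * ι ℂ w' * ι ℂ v₁ * ι ℂ v₂) +
      t 1 • (ι ℂ u₂ * ι ℂ w * ι ℂ w' * ι ℂ v₁ * ι ℂ v₃) +
      t 2 • (ι ℂ (u₁ + u₂) * ι ℂ w * ι ℂ w' * ι ℂ v₁ * ι ℂ (v₂ + v₃)) := by
  have hmove : ∀ p q, ι ℂ p * ι ℂ v₁ * ι ℂ q * (ι ℂ w * ι ℂ w') =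
      ι ℂ p * ι ℂ w * ι ℂ w' * ι ℂ v₁ * ι ℂ q := fun p q => by
    rw [mul_assoc _ (ι ℂ q), ← (commute_ι_mul_ι_ι w w' q).eq, ← mul_assoc, mul_assoc (ι ℂ p),
      ← (commute_ι_mul_ι_ι w w' v₁).eq]
    simp only [mul_assoc]
  simp only [betaComb, add_mul, smul_mul_assoc, hmove]

theorem betaComb_mul_ι_mul_ι_v₁ (t : Fin 3 → ℂ) (w : V) :
    betaComb u₁ u₂ v₁ v₂ v₃ t * (ι ℂ w * ι ℂ v₁) = 0 := by
  simp only [betaComb_mul_ι_mul_ι, mul_assoc, ι_mul_ι_mul_self, mul_zero, smul_zero, add_zero]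

instance : FiniteDimensional ℂ (Submodule.span ℂ ({u₁, u₂, u₃} : Set V)) :=
  FiniteDimensional.span_of_finite ℂ (Set.toFinite _)

theorem finrank_span_triple_lt_four : finrank ℂ (Submodule.span ℂ ({u₁, u₂, u₃} : Set V)) < 4 := by
  classical
  exact (finrank_span_le_card _).trans_lt (by simpa using Finset.card_le_three.trans_lt (by norm_num))

variable {x : ExteriorAlgebra ℂ V}
  (hx : x ∈ wedge21 (Submodule.span ℂ {u₁, u₂, u₃}) (Submodule.span ℂ {v₁, v₂, v₃}))
include hx

theorem add_betaComb_mul_ι_u₁_mul_ι_u₂ (t : Fin 3 → ℂ) :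
    (x + betaComb u₁ u₂ v₁ v₂ v₃ t) * (ι ℂ u₁ * ι ℂ u₂) = 0 := by
  rw [add_mul, mul_ι_mul_ι_eq_zero_of_mem_wedge21 finrank_span_triple_lt_four hx
    (Submodule.subset_span (by simp)) (Submodule.subset_span (by simp)), zero_add,
    betaComb_mul_ι_mul_ι]
  simp only [map_add, add_mul, mul_assoc, ι_sq_zero, ι_mul_ι_anticomm u₁ u₂, neg_mul, neg_zero,
    zero_mul, mul_zero, smul_zero, add_zero]

theorem add_betaComb_mul_ι_mul_ι_add_smul {w : V} (hw : w ∈ Submodule.span ℂ {u₁, u₂, u₃})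
    (t : Fin 3 → ℂ) (c : ℂ) :
    (x + betaComb u₁ u₂ v₁ v₂ v₃ t) * (ι ℂ w * ι ℂ (v₁ + c • u₃)) =
      x * (ι ℂ w * ι ℂ v₁) + c • (betaComb u₁ u₂ v₁ v₂ v₃ t * (ι ℂ w * ι ℂ u₃)) := by
  have hxu : x * (ι ℂ w * ι ℂ u₃) = 0 := mul_ι_mul_ι_eq_zero_of_mem_wedge21
    finrank_span_triple_lt_four hx hw (Submodule.subset_span (by simp))
  simp only [map_add, map_smul, mul_add, add_mul, mul_smul_comm, hxu, betaComb_mul_ι_mul_ι_v₁,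
    add_zero, zero_add]

theorem add_betaComb_mul_ι_u₁_mul_ι_add_smul
    (hvol : vol (ι ℂ u₁ * ι ℂ u₂ * ι ℂ u₃ * ι ℂ v₁ * ι ℂ v₂ * ι ℂ v₃) = 1) {t : Fin 3 → ℂ} {c : ℂ}
    (h₀ : vol (x * (ι ℂ u₁ * ι ℂ v₁ * ι ℂ v₂)) = -c * (t 1 + t 2)) :
    (x + betaComb u₁ u₂ v₁ v₂ v₃ t) * (ι ℂ u₁ * ι ℂ (v₁ + c • u₃)) =
      (vol (x * (ι ℂ u₁ * ι ℂ v₁ * ι ℂ v₃)) - c * t 2) •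
        (ι ℂ u₁ * ι ℂ u₂ * ι ℂ u₃ * ι ℂ v₁ * ι ℂ v₂) := by
  rw [add_betaComb_mul_ι_mul_ι_add_smul hx (Submodule.subset_span (by simp)),
    mul_ι_mul_ι_eq_of_mem_wedge21 hvol hx (Submodule.subset_span (by simp)), h₀,
    betaComb_mul_ι_mul_ι]
  simp only [map_add, add_mul, mul_add, mul_assoc, ι_mul_ι_mul_self, ι_mul_ι_mul_anticomm u₁ u₂,
    neg_mul, zero_mul, smul_zero, zero_add]
  module

theorem add_betaComb_mul_ι_u₂_mul_ι_add_smul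
    (hvol : vol (ι ℂ u₁ * ι ℂ u₂ * ι ℂ u₃ * ι ℂ v₁ * ι ℂ v₂ * ι ℂ v₃) = 1) {t : Fin 3 → ℂ} {c : ℂ}
    (h₀ : vol (x * (ι ℂ u₁ * ι ℂ v₁ * ι ℂ v₂)) = -c * (t 1 + t 2))
    (h₁ : vol (x * (ι ℂ u₂ * ι ℂ v₁ * ι ℂ v₃)) = -c * (t 0 + t 2))
    (h₂ : vol (x * (ι ℂ (u₁ + u₂) * ι ℂ v₁ * ι ℂ (v₂ + v₃))) = -c * (t 0 + t 1)) :
    (x + betaComb u₁ u₂ v₁ v₂ v₃ t) * (ι ℂ u₂ * ι ℂ (v₁ + c • u₃)) =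
      (vol (x * (ι ℂ u₁ * ι ℂ v₁ * ι ℂ v₃)) - c * t 2) •
        (ι ℂ u₁ * ι ℂ u₂ * ι ℂ u₃ * ι ℂ v₁ * ι ℂ v₃) := by
  have h₂₂ : vol (x * (ι ℂ u₂ * ι ℂ v₁ * ι ℂ v₂)) =
      2 * c * t 2 - vol (x * (ι ℂ u₁ * ι ℂ v₁ * ι ℂ v₃)) := by
    simp only [map_add, add_mul, mul_add] at h₂
    linear_combination h₂ - h₀ - h₁
  rw [add_betaComb_mul_ι_mul_ι_add_smul hx (Submodule.subset_span (by simp)),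
    mul_ι_mul_ι_eq_of_mem_wedge21 hvol hx (Submodule.subset_span (by simp)), h₁, h₂₂,
    betaComb_mul_ι_mul_ι]
  simp only [map_add, add_mul, mul_add, mul_assoc, ι_mul_ι_mul_self, neg_mul, zero_mul,
    smul_zero, add_zero]
  module

end Wedge21

theorem statement14_general (V : Type*) [AddCommGroup V] [Module ℂ V]
    (u₁ u₂ u₃ v₁ v₂ v₃ : V)
    (vol : ExteriorAlgebra ℂ V →ₗ[ℂ] ℂ)
    (hvol : vol (ι ℂ u₁ * ι ℂ u₂ * ι ℂ u₃ * ι ℂ v₁ * ι ℂ v₂ * ι ℂ v₃) = 1)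
    (α β : Fin 3 → ExteriorAlgebra ℂ V)
    (hα : ∀ i, α i ∈ wedge21 (Submodule.span ℂ ({u₁, u₂, u₃} : Set V))
      (Submodule.span ℂ ({v₁, v₂, v₃} : Set V)))
    (hβ0 : β 0 = ι ℂ u₁ * ι ℂ v₁ * ι ℂ v₂)
    (hβ1 : β 1 = ι ℂ u₂ * ι ℂ v₁ * ι ℂ v₃)
    (hβ2 : β 2 = ι ℂ (u₁ + u₂) * ι ℂ v₁ * ι ℂ (v₂ + v₃))
    (c : ℂ)
    (hzsq : ∀ i, vol (α i * β i) = 0)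
    (hzc : ∀ i j, i ≠ j → vol (α i * β j) = -c) :
    2 ≤ finrank ℂ
      ↥(LinearMap.ker ((LinearMap.mulRight ℂ (ι ℂ u₁ * ι ℂ u₂)).comp
          (Fintype.linearCombination ℂ fun i => α i + β i)) ⊓
        LinearMap.ker ((LinearMap.mulRight ℂ (ι ℂ u₁ * ι ℂ (v₁ + c • u₃))).comp
          (Fintype.linearCombination ℂ fun i => α i + β i)) ⊓
        LinearMap.ker ((LinearMap.mulRight ℂ (ι ℂ u₂ * ι ℂ (v₁ + c • u₃))).comp
          (Fintype.linearCombination ℂ fun i => α i + β i))) := by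
  let G : (Fin 3 → ℂ) →ₗ[ℂ] ℂ :=
    vol ∘ₗ LinearMap.mulRight ℂ (ι ℂ u₁ * ι ℂ v₁ * ι ℂ v₃) ∘ₗ Fintype.linearCombination ℂ α -
      c • LinearMap.proj 2
  refine (show 2 ≤ finrank ℂ (LinearMap.ker G) by
    simpa using G.finrank_le_finrank_ker_add_one).trans (Submodule.finrank_mono ?_)
  intro t ht
  have hx : Fintype.linearCombination ℂ α t ∈
      wedge21 (Submodule.span ℂ {u₁, u₂, u₃}) (Submodule.span ℂ {v₁, v₂, v₃}) := by
    rw [Fintype.linearCombination_apply]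
    exact Submodule.sum_mem _ fun i _ => Submodule.smul_mem _ _ (hα i)
  set x := Fintype.linearCombination ℂ α t
  have hω : Fintype.linearCombination ℂ (fun i => α i + β i) t =
      x + betaComb u₁ u₂ v₁ v₂ v₃ t := by
    simp only [x, Fintype.linearCombination_apply, Fin.sum_univ_three, betaComb, hβ0, hβ1, hβ2,
      smul_add]
    abel
  have h₀ : vol (x * (ι ℂ u₁ * ι ℂ v₁ * ι ℂ v₂)) = -c * (t 1 + t 2) := by
    rw [← hβ0, map_linearCombination_mul_eq vol hzsq hzc, Fin.sum_univ_three]; ring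
  have h₁ : vol (x * (ι ℂ u₂ * ι ℂ v₁ * ι ℂ v₃)) = -c * (t 0 + t 2) := by
    rw [← hβ1, map_linearCombination_mul_eq vol hzsq hzc, Fin.sum_univ_three]; ring
  have h₂ : vol (x * (ι ℂ (u₁ + u₂) * ι ℂ v₁ * ι ℂ (v₂ + v₃))) = -c * (t 0 + t 1) := by
    rw [← hβ2, map_linearCombination_mul_eq vol hzsq hzc, Fin.sum_univ_three]; ring
  have hG : vol (x * (ι ℂ u₁ * ι ℂ v₁ * ι ℂ v₃)) - c * t 2 = 0 := ht
  simp only [Submodule.mem_inf, LinearMap.mem_ker, LinearMap.comp_apply,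
    LinearMap.mulRight_apply, hω]
  rw [add_betaComb_mul_ι_u₁_mul_ι_add_smul hx hvol h₀,
    add_betaComb_mul_ι_u₂_mul_ι_add_smul hx hvol h₀ h₁ h₂, hG, zero_smul, zero_smul]
  exact ⟨⟨add_betaComb_mul_ι_u₁_mul_ι_u₂ hx t, rfl⟩, rfl⟩

/-- With `β₁ = u₁∧v₁∧v₂`, `β₂ = u₂∧v₁∧v₃`, `β₃ = (u₁+u₂)∧v₁∧(v₂+v₃)`
and `α₁, α₂, α₃ ∈ ⋀²U₁∧U₂` such that `(αᵢ+βᵢ)∧(αⱼ+βⱼ) = 0` for all `i, j`, and a complex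
number `c` with `vol(αᵢ∧βᵢ) = 0` and `vol(αᵢ∧βⱼ) = −c` for `i ≠ j`, the space of triples
`(λ₁,λ₂,λ₃) ∈ ℂ³` with `ω = ∑ λᵢ(αᵢ+βᵢ)` satisfying
`ω∧u₁∧u₂ = ω∧u₁∧(v₁+c·u₃) = ω∧u₂∧(v₁+c·u₃) = 0` is a linear subspace of `ℂ³` of
dimension at least 2. -/
theorem statement14 (V : Type*) [AddCommGroup V] [Module ℂ V]
    (u₁ u₂ u₃ v₁ v₂ v₃ : V)
    (hli : LinearIndependent ℂ ![u₁, u₂, u₃, v₁, v₂, v₃])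
    (hspan : Submodule.span ℂ ({u₁, u₂, u₃, v₁, v₂, v₃} : Set V) = ⊤)
    (vol : ExteriorAlgebra ℂ V →ₗ[ℂ] ℂ)
    (hvol : vol (ι ℂ u₁ * ι ℂ u₂ * ι ℂ u₃ * ι ℂ v₁ * ι ℂ v₂ * ι ℂ v₃) = 1)
    (α β : Fin 3 → ExteriorAlgebra ℂ V)
    (hα : ∀ i, α i ∈ wedge21 (Submodule.span ℂ ({u₁, u₂, u₃} : Set V))
      (Submodule.span ℂ ({v₁, v₂, v₃} : Set V)))
    (hβ0 : β 0 = ι ℂ u₁ * ι ℂ v₁ * ι ℂ v₂)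
    (hβ1 : β 1 = ι ℂ u₂ * ι ℂ v₁ * ι ℂ v₃)
    (hβ2 : β 2 = ι ℂ (u₁ + u₂) * ι ℂ v₁ * ι ℂ (v₂ + v₃))
    (hlag : ∀ i j, (α i + β i) * (α j + β j) = 0)
    (c : ℂ)
    (hzsq : ∀ i, vol (α i * β i) = 0)
    (hzc : ∀ i j, i ≠ j → vol (α i * β j) = -c) :
    2 ≤ finrank ℂ
      ↥(LinearMap.ker ((LinearMap.mulRight ℂ (ι ℂ u₁ * ι ℂ u₂)).comp
          (Fintype.linearCombination ℂ fun i => α i + β i)) ⊓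
        LinearMap.ker ((LinearMap.mulRight ℂ (ι ℂ u₁ * ι ℂ (v₁ + c • u₃))).comp
          (Fintype.linearCombination ℂ fun i => α i + β i)) ⊓
        LinearMap.ker ((LinearMap.mulRight ℂ (ι ℂ u₂ * ι ℂ (v₁ + c • u₃))).comp
          (Fintype.linearCombination ℂ fun i => α i + β i))) :=
  statement14_general V u₁ u₂ u₃ v₁ v₂ v₃ vol hvol α β hα hβ0 hβ1 hβ2 c hzsq hzc
end
end

section
/- Let n ≥ 1 and let M and R be symmetric n×n complex matrices. Suppose v ∈ ℂⁿ is a nonzero vector with Mv = 0 and vᵀRv = 0. Then trace(adjugate(M)·R) = 0; equivalently the directional derivative at t = 0 of the polynomial t ↦ det(M + tR) vanishes. (This expresses that the discriminant hypersurface of a linear system of quadrics is singular at any quadric of the system that is singular at a point of the base locus.) -/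
/-!
Choose a coordinate `k` with `v k ≠ 0` and let `P` be the identity matrix with its `k`-th column
replaced by `v`, so that `det P = v k`. In the congruent matrices `M' = Pᵀ M P` and
`R' = Pᵀ R P` the `k`-th row and column of `M'` vanish (as `Mv = 0` and `M` is symmetric) and
`R' k k = vᵀ R v = 0`. A matrix with vanishing `k`-th row and column has its adjugate supported on
the entry `(k, k)`, so `trace (adj M' * R') = 0`; since this trace equals
`(det P)² * trace (adj M * R)`, the claim follows.
-/

open Matrix

namespace Matrix

variable {ι α : Type*} [Fintype ι] [DecidableEq ι] [CommRing α]

theorem adjugate_apply_eq_zero_of_row_eq_zero {N : Matrix ι ι α} {k : ι} (h : ∀ j, N k j = 0)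
    (i : ι) {j : ι} (hj : j ≠ k) : N.adjugate i j = 0 := by
  rw [adjugate_apply]
  exact det_eq_zero_of_row_eq_zero k fun l => by rw [updateRow_ne hj.symm]; exact h l

theorem adjugate_apply_eq_zero_of_col_eq_zero {N : Matrix ι ι α} {k : ι} (h : ∀ i, N i k = 0)
    {i : ι} (hi : i ≠ k) (j : ι) : N.adjugate i j = 0 := by
  change N.adjugateᵀ j i = 0
  rw [adjugate_transpose]
  exact adjugate_apply_eq_zero_of_row_eq_zero h j hi

theorem trace_adjugate_mul_eq_zero_of_row_col_eq_zero {N S : Matrix ι ι α} {k : ι}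
    (hrow : ∀ j, N k j = 0) (hcol : ∀ i, N i k = 0) (hS : S k k = 0) :
    (N.adjugate * S).trace = 0 := by
  simp only [trace, diag, mul_apply]
  refine Finset.sum_eq_zero fun i _ => Finset.sum_eq_zero fun j _ => ?_
  by_cases hi : i = k
  · by_cases hj : j = k
    · subst hi hj
      rw [hS, mul_zero]
    · rw [adjugate_apply_eq_zero_of_row_eq_zero hrow i hj, zero_mul]
  · rw [adjugate_apply_eq_zero_of_col_eq_zero hcol hi j, zero_mul]

theorem trace_adjugate_transpose_mul_mul (P M S : Matrix ι ι α) :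
    ((Pᵀ * M * P).adjugate * (Pᵀ * S * P)).trace = P.det ^ 2 * (M.adjugate * S).trace := by
  have hPt : Pᵀ.adjugate * Pᵀ = P.det • 1 := by rw [adjugate_mul, det_transpose]
  calc ((Pᵀ * M * P).adjugate * (Pᵀ * S * P)).trace
      = (P.adjugate * M.adjugate * (Pᵀ.adjugate * Pᵀ) * S * P).trace := by
        simp only [adjugate_mul_distrib, Matrix.mul_assoc]
    _ = P.det * (P * P.adjugate * (M.adjugate * S)).trace := by
        rw [hPt, Matrix.mul_smul, Matrix.mul_one, Matrix.smul_mul, Matrix.smul_mul, trace_smul,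
          smul_eq_mul, trace_mul_comm]
        simp only [Matrix.mul_assoc]
    _ = P.det ^ 2 * (M.adjugate * S).trace := by
        rw [mul_adjugate, Matrix.smul_mul, Matrix.one_mul, trace_smul, smul_eq_mul, sq, mul_assoc]

theorem det_one_updateCol (k : ι) (v : ι → α) : (updateCol 1 k v).det = v k := by
  rw [← cramer_apply, cramer_one]
  rfl

omit [Fintype ι] in
theorem transpose_one_updateCol_self (k : ι) (v : ι → α) :
    (updateCol (1 : Matrix ι ι α) k v)ᵀ k = v := by
  rw [← transpose_one, updateCol_transpose, transpose_transpose, updateRow_self]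

omit [DecidableEq ι] in
theorem transpose_mul_mul_apply (P A : Matrix ι ι α) (i j : ι) :
    (Pᵀ * A * P) i j = Pᵀ i ⬝ᵥ A *ᵥ Pᵀ j := by
  rw [Matrix.mul_assoc]
  rfl

theorem trace_adjugate_mul_eq_zero_of_isSymm_of_mulVec_eq_zero [IsDomain α]
    {M S : Matrix ι ι α} (hM : M.IsSymm) {v : ι → α} (hv : v ≠ 0) (hMv : M *ᵥ v = 0)
    (hSv : v ⬝ᵥ S *ᵥ v = 0) : (M.adjugate * S).trace = 0 := by
  obtain ⟨k, hk⟩ : ∃ k, v k ≠ 0 := Function.ne_iff.mp hv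
  set P := updateCol (1 : Matrix ι ι α) k v
  have hPk : Pᵀ k = v := transpose_one_updateCol_self k v
  have hcol : ∀ i, (Pᵀ * M * P) i k = 0 := fun i => by
    rw [transpose_mul_mul_apply, hPk, hMv, dotProduct_zero]
  have hrow : ∀ j, (Pᵀ * M * P) k j = 0 := fun j => by
    rw [transpose_mul_mul_apply, hPk, dotProduct_mulVec, ← hM.eq, vecMul_transpose, hMv,
      zero_dotProduct]
  have hdiag : (Pᵀ * S * P) k k = 0 := by rw [transpose_mul_mul_apply, hPk, hSv]
  have htrace := trace_adjugate_transpose_mul_mul P M S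
  rw [trace_adjugate_mul_eq_zero_of_row_col_eq_zero hrow hcol hdiag, det_one_updateCol] at htrace
  exact (mul_eq_zero.mp htrace.symm).resolve_left (pow_ne_zero 2 hk)

end Matrix

theorem statement15_general (n : ℕ) (M R : Matrix (Fin n) (Fin n) ℂ)
    (hM : M.IsSymm)
    (v : Fin n → ℂ) (hv : v ≠ 0)
    (hMv : M.mulVec v = 0) (hRv : v ⬝ᵥ R.mulVec v = 0) :
    (M.adjugate * R).trace = 0 :=
  trace_adjugate_mul_eq_zero_of_isSymm_of_mulVec_eq_zero hM hv hMv hRv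

/-- Let `M` and `R` be symmetric `n×n` complex matrices, and suppose
`v ∈ ℂⁿ` is nonzero with `Mv = 0` and `vᵀRv = 0`. Then `trace (adjugate M * R) = 0`,
i.e. the directional derivative at `t = 0` of `t ↦ det (M + tR)` vanishes. -/
theorem statement15 (n : ℕ) (hn : 1 ≤ n) (M R : Matrix (Fin n) (Fin n) ℂ)
    (hM : M.IsSymm) (hR : R.IsSymm)
    (v : Fin n → ℂ) (hv : v ≠ 0)
    (hMv : M.mulVec v = 0) (hRv : v ⬝ᵥ R.mulVec v = 0) :
    (M.adjugate * R).trace = 0 :=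
  statement15_general n M R hM v hv hMv hRv
end
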